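/- Let r be an even positive integer. There is no function f : ℕ → ℕ satisfying tree-α(G^r) ≤ f(tree-α(G)) for all finite simple graphs G; that is, for every function f : ℕ → ℕ there exists a finite simple graph G with tree-α(G^r) > f(tree-α(G)). -/
import Mathlib


open SimpleGraph

namespace Paper

/-- A tree decomposition of a graph `G`. -/
structure TreeDecomp {V : Type} (G : SimpleGraph V) where
  ι : Type
  fin : Fintype ι
  tree : SimpleGraph ι
  isTree : tree.IsTree
  bag : ι → Set V
  mem_bag : ∀ v : V, ∃ t, v ∈ bag t
  edge_bag : ∀ ⦃u w : V⦄, G.Adj u w → ∃ t, u ∈ bag t ∧ w ∈ bag t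
  coherent : ∀ v : V, (tree.induce {t | v ∈ bag t}).Connected

/-- `M` is an induced matching in `G`: a set of edges, pairwise disjoint,
with no edge of `G` joining endpoints of distinct edges of `M`. -/
def IsInducedMatching {V : Type} (G : SimpleGraph V) (M : Finset (V × V)) : Prop :=
  (∀ p ∈ M, G.Adj p.1 p.2) ∧
    ∀ p ∈ M, ∀ q ∈ M, p ≠ q →
      (p.1 ≠ q.1 ∧ p.1 ≠ q.2 ∧ p.2 ≠ q.1 ∧ p.2 ≠ q.2) ∧
      (¬ G.Adj p.1 q.1 ∧ ¬ G.Adj p.1 q.2 ∧ ¬ G.Adj p.2 q.1 ∧ ¬ G.Adj p.2 q.2)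

/-- Every edge of `M` has an endpoint in `X`. -/
def Touches {V : Type} (M : Finset (V × V)) (X : Set V) : Prop :=
  ∀ p ∈ M, p.1 ∈ X ∨ p.2 ∈ X

/-- μ(𝒯): the maximum size of an induced matching of `G` all of whose edges
touch a common bag of the tree decomposition `D`. -/
noncomputable def mu {V : Type} (G : SimpleGraph V) (D : TreeDecomp G) : ℕ :=
  sSup {n | ∃ (t : D.ι) (M : Finset (V × V)),
    IsInducedMatching G M ∧ Touches M (D.bag t) ∧ M.card = n}

/-- Induced matching treewidth: minimum of μ(𝒯) over tree decompositions. -/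
noncomputable def treeMu {V : Type} (G : SimpleGraph V) : ℕ :=
  sInf {n | ∃ D : TreeDecomp G, mu G D = n}

/-- `S` is an independent set of `G`. -/
def IsIndepSet {V : Type} (G : SimpleGraph V) (S : Finset V) : Prop :=
  ∀ u ∈ S, ∀ v ∈ S, u ≠ v → ¬ G.Adj u v

/-- α(𝒯): the maximum size of an independent set of `G` contained in a bag. -/
noncomputable def alphaTD {V : Type} (G : SimpleGraph V) (D : TreeDecomp G) : ℕ :=
  sSup {n | ∃ (t : D.ι) (S : Finset V),
    IsIndepSet G S ∧ ↑S ⊆ D.bag t ∧ S.card = n}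

/-- Tree-independence number: minimum of α(𝒯) over tree decompositions. -/
noncomputable def treeAlpha {V : Type} (G : SimpleGraph V) : ℕ :=
  sInf {n | ∃ D : TreeDecomp G, alphaTD G D = n}

/-- The `k`-th power of `G`: distinct vertices adjacent iff their distance in `G`
is at most `k` (for `k = 0` this is the edgeless graph). -/
def power {V : Type} (G : SimpleGraph V) (k : ℕ) : SimpleGraph V :=
  SimpleGraph.fromRel (fun u v => G.Reachable u v ∧ G.dist u v ≤ k)

/-- The graph `G°[ℋ]` for a family `ℋ = {H j}` of subgraphs of `G`: vertices are
indices `j`, two distinct indices adjacent iff the subgraphs share a vertex or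
there is an edge of `G` between them. -/
def blowup {V J : Type} (G : SimpleGraph V) (H : J → G.Subgraph) : SimpleGraph J :=
  SimpleGraph.fromRel (fun i j =>
    ((H i).verts ∩ (H j).verts).Nonempty ∨
      ∃ u ∈ (H i).verts, ∃ v ∈ (H j).verts, G.Adj u v)




section TreeHelpers

variable {ι : Type}

lemma connected_induce_singleton (T : SimpleGraph ι) (x : ι) :
    (T.induce {x}).Connected := by
  haveI : Nonempty ({x} : Set ι) := ⟨⟨x, rfl⟩⟩
  constructor
  intro a b
  have : a = b := Subtype.ext (a.2.trans b.2.symm)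
  rw [this]

lemma connected_induce_univ {T : SimpleGraph ι} (h : T.Connected) :
    (T.induce Set.univ).Connected :=
  h.map (induceUnivIso T).symm.toHom (induceUnivIso T).symm.toEquiv.surjective

lemma exists_walk_of_induce_connected {T : SimpleGraph ι} {S : Set ι}
    (h : (T.induce S).Connected) {x y : ι} (hx : x ∈ S) (hy : y ∈ S) :
    ∃ w : T.Walk x y, ∀ z ∈ w.support, z ∈ S := by
  obtain ⟨w0⟩ := h ⟨x, hx⟩ ⟨y, hy⟩
  let f : T.induce S →g T := ⟨Subtype.val, fun {a b} hab => hab⟩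
  refine ⟨w0.map f, ?_⟩
  intro z hz
  rw [Walk.support_map] at hz
  obtain ⟨z', _, rfl⟩ := List.mem_map.mp hz
  exact z'.2

/-- The vertices that can reach `u` by a walk avoiding `t`. -/
def Side (T : SimpleGraph ι) (t u : ι) : Set ι := {y | ∃ w : T.Walk y u, t ∉ w.support}

lemma side_disjoint {T : SimpleGraph ι} (hT : T.IsAcyclic) {t u : ι} (h : T.Adj t u) :
    ∀ y, y ∈ Side T t u → y ∈ Side T u t → False := by
  classical
  rintro y ⟨w1, h1⟩ ⟨w2, h2⟩
  have he1 : s(u, t) ∉ w1.edges := fun he => h1 (w1.snd_mem_support_of_mem_edges he)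
  have he2 : s(u, t) ∉ w2.edges := fun he => h2 (w2.fst_mem_support_of_mem_edges he)
  have heW : s(u, t) ∉ (w1.reverse.append w2).edges := by
    rw [Walk.edges_append, List.mem_append, Walk.edges_reverse, List.mem_reverse]
    rintro (hh | hh)
    · exact he1 hh
    · exact he2 hh
  have hbp : s(u, t) ∉ (w1.reverse.append w2).bypass.edges :=
    fun hh => heW ((w1.reverse.append w2).edges_bypass_subset hh)
  have hpe : (⟨(w1.reverse.append w2).bypass, Walk.bypass_isPath _⟩ : T.Path u t)
      = Path.singleton h.symm := hT.path_unique _ _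
  apply hbp
  have : (w1.reverse.append w2).bypass = (Path.singleton h.symm : T.Path u t).1 :=
    congrArg Subtype.val hpe
  rw [this]
  simp [Path.singleton]

lemma exists_two_cycle [Fintype ι] {T : SimpleGraph ι} (hT : T.IsTree)
    (σ : ι → ι) (hσ : ∀ t, T.Adj t (σ t)) : ∃ t, σ (σ t) = t := by
  classical
  haveI : Fintype T.edgeSet := Fintype.ofFinite _
  have hcard : T.edgeFinset.card < Fintype.card ι := by
    have := hT.card_edgeFinset
    omega
  have hmaps : ∀ t ∈ (Finset.univ : Finset ι), s(t, σ t) ∈ T.edgeFinset := by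
    intro t _
    rw [mem_edgeFinset]
    exact hσ t
  obtain ⟨t, _, t', _, hne, heq⟩ :=
    Finset.exists_ne_map_eq_of_card_lt_of_maps_to (by simpa using hcard) hmaps
  rw [Sym2.eq_iff] at heq
  rcases heq with ⟨rfl, -⟩ | ⟨h1, h2⟩
  · exact absurd rfl hne
  · exact ⟨t, by rw [h2, ← h1]⟩

lemma tree_cross [Fintype ι] {T : SimpleGraph ι} (hT : T.IsTree)
    {A B : Type} (SA : A → Set ι) (SB : B → Set ι)
    (hA : ∀ a, (T.induce (SA a)).Connected) (hB : ∀ b, (T.induce (SB b)).Connected)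
    (hX : ∀ a b, (SA a ∩ SB b).Nonempty) :
    (∃ t, ∀ a, t ∈ SA a) ∨ (∃ t, ∀ b, t ∈ SB b) := by
  classical
  by_contra hcon
  push_neg at hcon
  obtain ⟨hL, hR⟩ := hcon
  choose fa hfa using hL
  choose fb hfb using hR
  have key : ∀ t, ∃ u, T.Adj t u ∧ SA (fa t) ⊆ Side T t u ∧ SB (fb t) ⊆ Side T t u := by
    intro t
    obtain ⟨x, hxA, hxB⟩ := hX (fa t) (fb t)
    have hxt : t ≠ x := fun h => hfa t (h ▸ hxA)
    obtain ⟨p0⟩ := hT.isConnected t x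
    obtain ⟨u, hadj, q, hq⟩ := Walk.exists_eq_cons_of_ne hxt p0.toPath.1
    have hp : (Walk.cons hadj q).IsPath := hq ▸ p0.toPath.2
    rw [Walk.cons_isPath_iff] at hp
    refine ⟨u, hadj, ?_, ?_⟩
    · intro y hy
      obtain ⟨w, hw⟩ := exists_walk_of_induce_connected (hA (fa t)) hy hxA
      refine ⟨w.append q.reverse, ?_⟩
      rw [Walk.mem_support_append_iff]
      rintro (hh | hh)
      · exact hfa t (hw _ hh)
      · exact hp.2 (by rwa [Walk.support_reverse, List.mem_reverse] at hh)
    · intro y hy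
      obtain ⟨w, hw⟩ := exists_walk_of_induce_connected (hB (fb t)) hy hxB
      refine ⟨w.append q.reverse, ?_⟩
      rw [Walk.mem_support_append_iff]
      rintro (hh | hh)
      · exact hfb t (hw _ hh)
      · exact hp.2 (by rwa [Walk.support_reverse, List.mem_reverse] at hh)
  choose σ hσ1 hσ2 hσ3 using key
  obtain ⟨t, ht⟩ := exists_two_cycle hT σ hσ1
  obtain ⟨z, hz1, hz2⟩ := hX (fa t) (fb (σ t))
  have h2 := hσ3 (σ t) hz2
  rw [ht] at h2
  exact side_disjoint hT.IsAcyclic (hσ1 t) z (hσ2 t hz1) h2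

end TreeHelpers

/-- A star graph on `Option L` with center `none`. -/
def starG (L : Type) : SimpleGraph (Option L) :=
  SimpleGraph.fromRel (fun x _ => x = none)

lemma starG_adj {L : Type} {x y : Option L} :
    (starG L).Adj x y ↔ x ≠ y ∧ (x = none ∨ y = none) := by
  simp [starG, fromRel_adj]

lemma starG_connected (L : Type) : (starG L).Connected := by
  have hreach : ∀ x : Option L, (starG L).Reachable x none := by
    intro x
    cases x with
    | none => exact Reachable.refl _
    | some a => exact (starG_adj.mpr ⟨by simp, Or.inr rfl⟩).reachable
  constructor
  intro u v
  exact (hreach u).trans (hreach v).symm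

lemma starG_acyclic (L : Type) : (starG L).IsAcyclic := by
  intro v c hc
  have h3 := hc.three_le_length
  cases c with
  | nil => simp at h3
  | @cons _ x _ h p =>
    rw [Walk.cons_isCycle_iff] at hc
    cases p with
    | nil => simp at h3
    | @cons _ y _ h2 q =>
      have hq := hc.1
      rw [Walk.cons_isPath_iff] at hq
      rw [starG_adj] at h
      rcases h.2 with hv | hx
      · -- v = none, so x ≠ none, and then y = none = v
        rw [starG_adj] at h2
        have hxn : x ≠ none := fun hh => h.1 (by rw [hv, hh])
        have hy : y = none := by
          rcases h2.2 with h' | h'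
          · exact absurd h' hxn
          · exact h'
        subst hv
        subst hy
        rw [Walk.isPath_iff_eq_nil] at hq
        rw [hq.1] at h3
        simp at h3
      · -- x = none; then v ≠ none
        subst hx
        rw [starG_adj] at h2
        have hyn : y ≠ none := fun hh => h2.1 (by rw [hh])
        cases q with
        | nil => simp at h3
        | @cons _ z _ h4 t =>
          rw [starG_adj] at h4
          have hz : z = none := by
            rcases h4.2 with h' | h'
            · exact absurd h' hyn
            · exact h'
          apply hq.2
          rw [Walk.support_cons]
          right
          rw [← hz]
          exact Walk.start_mem_support t
  -- done

lemma starG_isTree (L : Type) : (starG L).IsTree :=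
  ⟨starG_connected L, starG_acyclic L⟩

/-- The trivial one-bag tree decomposition. -/
def trivDecomp {V : Type} (G : SimpleGraph V) : TreeDecomp G where
  ι := Unit
  fin := inferInstance
  tree := ⊥
  isTree := by
    constructor
    · constructor
      intro u v
      rw [Subsingleton.elim u v]
    · exact isAcyclic_bot
  bag := fun _ => Set.univ
  mem_bag := fun v => ⟨(), trivial⟩
  edge_bag := fun u w _ => ⟨(), trivial, trivial⟩
  coherent := by
    intro v
    have hset : {t : Unit | v ∈ Set.univ} = Set.univ := by
      ext t; simp
    rw [hset]
    apply connected_induce_univ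
    constructor
    intro u v
    rw [Subsingleton.elim u v]

abbrev Vtx (m n : ℕ) : Type := (Bool × Fin n × Fin (m+1)) ⊕ (Fin n × Fin n)

def Rel (m n : ℕ) : Vtx m n → Vtx m n → Prop
  | .inl (σ, i, k), .inl (σ', i', k') => σ = σ' ∧ i = i' ∧ (k' : ℕ) = (k : ℕ) + 1
  | .inl (σ, i, k), .inr (p, q) => (k : ℕ) = m ∧ (σ = false → p = i) ∧ (σ = true → q = i)
  | .inr _, .inl _ => False
  | .inr _, .inr _ => True

def Gg (m n : ℕ) : SimpleGraph (Vtx m n) := SimpleGraph.fromRel (Rel m n)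

def xv (m n : ℕ) (σ : Bool) (i : Fin n) : Vtx m n :=
  Sum.inl (σ, i, (⟨0, Nat.succ_pos m⟩ : Fin (m+1)))

def pot (m n : ℕ) (σ0 : Bool) (i0 : Fin n) : Vtx m n → ℕ
  | .inl (σ, i, k) =>
      if σ = σ0 then (if i = i0 then (k : ℕ) else 2*m+3-(k : ℕ)) else 2*m+2-(k : ℕ)
  | .inr (p, q) => if (if σ0 then q = i0 else p = i0) then m+1 else m+2

lemma Gg_adj {m n : ℕ} {u v : Vtx m n} :
    (Gg m n).Adj u v ↔ u ≠ v ∧ (Rel m n u v ∨ Rel m n v u) :=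
  SimpleGraph.fromRel_adj _ _ _

lemma power_adj {V : Type} {G : SimpleGraph V} {k : ℕ} {u v : V} :
    (power G k).Adj u v ↔ u ≠ v ∧ ((G.Reachable u v ∧ G.dist u v ≤ k) ∨
      (G.Reachable v u ∧ G.dist v u ≤ k)) :=
  SimpleGraph.fromRel_adj _ _ _

lemma pot_rel {m n : ℕ} (σ0 : Bool) (i0 : Fin n) :
    ∀ u v, Rel m n u v →
      pot m n σ0 i0 u ≤ pot m n σ0 i0 v + 1 ∧ pot m n σ0 i0 v ≤ pot m n σ0 i0 u + 1 := by
  rintro (⟨σ, i, k⟩ | ⟨p, q⟩) (⟨σ', i', k'⟩ | ⟨p', q'⟩) h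
  · obtain ⟨rfl, rfl, hk⟩ := h
    have h1 : (k : ℕ) < m+1 := k.isLt
    have h2 : (k' : ℕ) < m+1 := k'.isLt
    simp only [pot]
    split_ifs <;> omega
  · obtain ⟨hk, hf, ht⟩ := h
    have h1 : (k : ℕ) < m + 1 := k.isLt
    simp only [pot]
    cases σ0 <;> cases σ <;> simp_all <;> split_ifs <;> simp_all <;> omega
  · exact h.elim
  · simp only [pot]
    split_ifs <;> omega

lemma pot_adj {m n : ℕ} (σ0 : Bool) (i0 : Fin n) {u v : Vtx m n} (h : (Gg m n).Adj u v) :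
    pot m n σ0 i0 u ≤ pot m n σ0 i0 v + 1 := by
  rw [Gg_adj] at h
  rcases h.2 with hr | hr
  · exact (pot_rel σ0 i0 u v hr).1
  · exact (pot_rel σ0 i0 v u hr).2

lemma pot_walk {m n : ℕ} (σ0 : Bool) (i0 : Fin n) :
    ∀ {u v : Vtx m n} (w : (Gg m n).Walk u v),
      pot m n σ0 i0 v ≤ pot m n σ0 i0 u + w.length := by
  intro u v w
  induction w with
  | nil => simp
  | cons h p ih =>
    have h1 := pot_adj σ0 i0 h.symm
    rw [Walk.length_cons]
    omega

lemma far_same_side {m n : ℕ} (σ : Bool) {i j : Fin n} (hij : j ≠ i)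
    (w : (Gg m n).Walk (xv m n σ i) (xv m n σ j)) : 2*m+3 ≤ w.length := by
  have h := pot_walk σ i w
  have h1 : pot m n σ i (xv m n σ i) = 0 := by simp [pot, xv]
  have h2 : pot m n σ i (xv m n σ j) = 2*m+3 := by simp [pot, xv, hij]
  omega

lemma climb (m n : ℕ) (σ : Bool) (i : Fin n) :
    ∀ l : ℕ, (hl : l ≤ m) →
      ∃ w : (Gg m n).Walk (xv m n σ i) (.inl (σ, i, ⟨l, by omega⟩)), w.length = l := by
  intro l
  induction l with
  | zero => intro _; exact ⟨Walk.nil, rfl⟩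
  | succ l ih =>
    intro hl
    obtain ⟨w, hw⟩ := ih (by omega)
    have hadj : (Gg m n).Adj (.inl (σ, i, ⟨l, by omega⟩)) (.inl (σ, i, ⟨l+1, by omega⟩)) := by
      rw [Gg_adj]
      refine ⟨by simp, Or.inl ⟨rfl, rfl, by simp⟩⟩
    exact ⟨w.concat hadj, by rw [Walk.length_concat, hw]⟩

lemma cross_walk (m n : ℕ) (i j : Fin n) :
    ∃ w : (Gg m n).Walk (xv m n false i) (xv m n true j), w.length = 2*m+2 := by
  obtain ⟨w1, hw1⟩ := climb m n false i m le_rfl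
  obtain ⟨w2, hw2⟩ := climb m n true j m le_rfl
  have e1 : (Gg m n).Adj (.inl (false, i, ⟨m, by omega⟩)) (.inr (i, j)) := by
    rw [Gg_adj]
    exact ⟨by simp, Or.inl ⟨rfl, fun _ => rfl, fun h => by simp at h⟩⟩
  have e2 : (Gg m n).Adj (.inr (i, j)) (.inl (true, j, ⟨m, by omega⟩)) := by
    rw [Gg_adj]
    exact ⟨by simp, Or.inr ⟨rfl, fun h => by simp at h, fun _ => rfl⟩⟩
  refine ⟨((w1.concat e1).concat e2).append w2.reverse, ?_⟩
  rw [Walk.length_append, Walk.length_reverse, Walk.length_concat, Walk.length_concat, hw1, hw2]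
  omega

lemma power_cross {m n r : ℕ} (hr : 2*m+2 ≤ r) (i j : Fin n) :
    (power (Gg m n) r).Adj (xv m n false i) (xv m n true j) := by
  obtain ⟨w, hw⟩ := cross_walk m n i j
  rw [power_adj]
  refine ⟨by simp [xv], Or.inl ⟨w.reachable, le_trans (dist_le w) (by omega)⟩⟩

lemma power_indep {m n r : ℕ} (hrr : r ≤ 2*m+2) (σ : Bool) {i j : Fin n} (hij : i ≠ j) :
    ¬ (power (Gg m n) r).Adj (xv m n σ i) (xv m n σ j) := by
  intro h
  rw [power_adj] at h
  rcases h.2 with ⟨hre, hd⟩ | ⟨hre, hd⟩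
  · obtain ⟨w, hw⟩ := hre.exists_walk_length_eq_dist
    have := far_same_side σ (hij.symm) w
    omega
  · obtain ⟨w, hw⟩ := hre.exists_walk_length_eq_dist
    have := far_same_side σ hij w
    omega


section Decomp

/-- Bags of the star-shaped tree decomposition of `Gg m n`. -/
def bagOf (m n : ℕ) : Option (Bool × Fin n) → Set (Vtx m n)
  | none => Set.range Sum.inr
  | some (σ, i) => Set.range Sum.inr ∪ {v | ∃ k, v = Sum.inl (σ, i, k)}

def decompG (m n : ℕ) : TreeDecomp (Gg m n) where
  ι := Option (Bool × Fin n)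
  fin := inferInstance
  tree := starG _
  isTree := starG_isTree _
  bag := bagOf m n
  mem_bag := by
    rintro (⟨σ, i, k⟩ | pq)
    · exact ⟨some (σ, i), Or.inr ⟨k, rfl⟩⟩
    · exact ⟨none, ⟨pq, rfl⟩⟩
  edge_bag := by
    have key : ∀ u w, Rel m n u w → ∃ t, u ∈ bagOf m n t ∧ w ∈ bagOf m n t := by
      rintro (⟨σ, i, k⟩ | pq) (⟨σ', i', k'⟩ | pq') h
      · obtain ⟨rfl, rfl, -⟩ := h
        exact ⟨some (σ, i), Or.inr ⟨k, rfl⟩, Or.inr ⟨k', rfl⟩⟩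
      · exact ⟨some (σ, i), Or.inr ⟨k, rfl⟩, Or.inl ⟨pq', rfl⟩⟩
      · exact h.elim
      · exact ⟨none, ⟨pq, rfl⟩, ⟨pq', rfl⟩⟩
    intro u w hadj
    rw [Gg_adj] at hadj
    rcases hadj.2 with h | h
    · exact key u w h
    · obtain ⟨t, h1, h2⟩ := key w u h
      exact ⟨t, h2, h1⟩
  coherent := by
    rintro (⟨σ, i, k⟩ | pq)
    · have hset : {t | Sum.inl (σ, i, k) ∈ bagOf m n t} = {some (σ, i)} := by
        ext t
        cases t with
        | none => simp [bagOf]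
        | some si =>
          obtain ⟨σ', i'⟩ := si
          simp only [Set.mem_setOf_eq, bagOf, Set.mem_union, Set.mem_range,
            Set.mem_singleton_iff]
          constructor
          · rintro (⟨y, hy⟩ | ⟨k', hk'⟩)
            · simp at hy
            · simp only [Sum.inl.injEq, Prod.mk.injEq] at hk'
              rw [← hk'.1, ← hk'.2.1]
          · intro h
            simp only [Option.some.injEq, Prod.mk.injEq] at h
            obtain ⟨rfl, rfl⟩ := h
            exact Or.inr ⟨k, rfl⟩
      rw [hset]
      exact connected_induce_singleton _ _
    · have hset : {t | Sum.inr pq ∈ bagOf m n t} = Set.univ := by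
        ext t
        cases t with
        | none => simp [bagOf]
        | some si =>
          obtain ⟨σ', i'⟩ := si
          simp [bagOf]
      rw [hset]
      exact connected_induce_univ (starG_connected _)

lemma M_adj {m n : ℕ} {pq pq' : Fin n × Fin n} (h : pq ≠ pq') :
    (Gg m n).Adj (Sum.inr pq) (Sum.inr pq') :=
  Gg_adj.mpr ⟨by simpa using h, Or.inl trivial⟩

lemma alphaTD_decompG (m n : ℕ) : alphaTD (Gg m n) (decompG m n) ≤ m + 2 := by
  classical
  apply csSup_le
  · exact ⟨0, none, ∅, by simp [IsIndepSet], by simp, rfl⟩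
  rintro x ⟨t, S, hind, hsub, rfl⟩
  have hM : (S.filter (fun v => v.isRight)).card ≤ 1 := by
    rw [Finset.card_le_one]
    intro u hu v hv
    by_contra hne
    rw [Finset.mem_filter] at hu hv
    obtain ⟨pu, rfl⟩ := Sum.isRight_iff.mp hu.2
    obtain ⟨pv, rfl⟩ := Sum.isRight_iff.mp hv.2
    exact hind _ hu.1 _ hv.1 hne (M_adj (fun h => hne (by rw [h])))
  have hB : (S.filter (fun v => ¬ v.isRight)).card ≤ m + 1 := by
    cases t with
    | none =>
      have hemp : S.filter (fun v => ¬ v.isRight) = ∅ := by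
        rw [Finset.filter_eq_empty_iff]
        intro v hv
        obtain ⟨y, rfl⟩ := hsub hv
        simp
      rw [hemp]
      simp
    | some si =>
      obtain ⟨σ, i⟩ := si
      have hcard : (Finset.univ : Finset (Fin (m+1))).card = m + 1 := by
        simp
      refine le_trans ?_ (le_of_eq hcard)
      apply Finset.card_le_card_of_injOn
          (fun v => match v with | Sum.inl (_, _, k) => k | Sum.inr _ => ⟨0, Nat.succ_pos m⟩)
      · intro a _
        exact Finset.mem_univ _
      · intro u hu v hv huv
        rw [Finset.coe_filter, Set.mem_setOf_eq] at hu hv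
        have hu' : ∃ k, u = Sum.inl (σ, i, k) := by
          rcases hsub hu.1 with ⟨y, hy⟩ | h
          · exact absurd (by rw [← hy]; simp : u.isRight) hu.2
          · exact h
        have hv' : ∃ k, v = Sum.inl (σ, i, k) := by
          rcases hsub hv.1 with ⟨y, hy⟩ | h
          · exact absurd (by rw [← hy]; simp : v.isRight) hv.2
          · exact h
        obtain ⟨ku, rfl⟩ := hu'
        obtain ⟨kv, rfl⟩ := hv'
        simp only at huv
        rw [huv]
  have := Finset.card_filter_add_card_filter_not (s := S)
      (p := fun v => v.isRight = true)
  omega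

lemma treeAlpha_Gg_le (m n : ℕ) : treeAlpha (Gg m n) ≤ m + 2 :=
  le_trans (Nat.sInf_le ⟨decompG m n, rfl⟩) (alphaTD_decompG m n)

lemma alphaTD_power_ge {m n r : ℕ} (hr : r = 2*m+2)
    (D : TreeDecomp (power (Gg m n) r)) : n ≤ alphaTD (power (Gg m n) r) D := by
  classical
  haveI := D.fin
  have main : ∀ (σ : Bool) (t : D.ι), (∀ i : Fin n, xv m n σ i ∈ D.bag t) →
      n ≤ alphaTD (power (Gg m n) r) D := by
    intro σ t ht
    have hinj : Function.Injective (xv m n σ) := by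
      intro i j h
      simpa [xv] using h
    have hmem : n ∈ {x | ∃ (t : D.ι) (S : Finset (Vtx m n)),
        IsIndepSet (power (Gg m n) r) S ∧ ↑S ⊆ D.bag t ∧ S.card = x} := by
      refine ⟨t, Finset.univ.image (xv m n σ), ?_, ?_, ?_⟩
      · intro u hu v hv huv
        rw [Finset.mem_image] at hu hv
        obtain ⟨i, -, rfl⟩ := hu
        obtain ⟨j, -, rfl⟩ := hv
        exact power_indep (le_of_eq hr) σ (fun h => huv (by rw [h]))
      · intro v hv
        rw [Finset.coe_image] at hv
        obtain ⟨i, -, rfl⟩ := hv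
        exact ht i
      · rw [Finset.card_image_of_injective _ hinj, Finset.card_univ, Fintype.card_fin]
    apply le_csSup _ hmem
    refine ⟨Fintype.card (Vtx m n), ?_⟩
    rintro x ⟨t', S', -, -, rfl⟩
    exact le_trans (Finset.card_le_univ S') (le_of_eq (Finset.card_univ))
  have hcross := tree_cross (T := D.tree) D.isTree
      (SA := fun i : Fin n => {t | xv m n false i ∈ D.bag t})
      (SB := fun j : Fin n => {t | xv m n true j ∈ D.bag t})
      (fun i => D.coherent _) (fun j => D.coherent _)
      (fun i j => by
        obtain ⟨t', h1, h2⟩ := D.edge_bag (power_cross (le_of_eq hr.symm) i j)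
        exact ⟨t', h1, h2⟩)
  rcases hcross with ⟨t, ht⟩ | ⟨t, ht⟩
  · exact main false t ht
  · exact main true t ht

lemma treeAlpha_power_ge {m n r : ℕ} (hr : r = 2*m+2) :
    n ≤ treeAlpha (power (Gg m n) r) := by
  have hne : {x | ∃ D : TreeDecomp (power (Gg m n) r),
      alphaTD (power (Gg m n) r) D = x}.Nonempty :=
    ⟨_, trivDecomp _, rfl⟩
  apply le_csInf hne
  rintro x ⟨D, rfl⟩
  exact alphaTD_power_ge hr D

end Decomp

/-- for even positive `r`, no function `f : ℕ → ℕ` satisfies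
tree-α(G^r) ≤ f(tree-α(G)) for all finite graphs `G`. -/
theorem stmt9 (r : ℕ) (hr : 0 < r) (heven : Even r) (f : ℕ → ℕ) :
    ∃ (V : Type) (_ : Fintype V) (G : SimpleGraph V),
      f (treeAlpha G) < treeAlpha (power G r) := by
  obtain ⟨k, hk⟩ := heven
  have hk1 : 1 ≤ k := by omega
  set m := k - 1 with hm
  have hr' : r = 2*m+2 := by omega
  set N := (Finset.range (r+1)).sup f with hN
  set n := N + 1 with hn
  refine ⟨Vtx m n, inferInstance, Gg m n, ?_⟩
  have hub : treeAlpha (Gg m n) ≤ r := le_trans (treeAlpha_Gg_le m n) (by omega)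
  have h1 : f (treeAlpha (Gg m n)) ≤ N :=
    Finset.le_sup (Finset.mem_range.mpr (by omega))
  have h2 : n ≤ treeAlpha (power (Gg m n) r) := treeAlpha_power_ge hr'
  omega

end Paper
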